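/- arXiv:1806.09098 — 6 statements merged into one kernel-verified Lean document; each statement's English description precedes it below -/
import Mathlib

section
/- Let {K_α, Λ_α}_{α∈Λ} be an f.r.f.t. nested structure of K. Then for every α ∈ Λ, the set C_α = ⋃_{β≠β'∈Λ_α} K_β ∩ K_{β'} is finite, and K_α ∖ C_α is the disjoint union over β ∈ Λ_α of the sets K_β ∖ C_α. -/
open Set

noncomputable section

/-- Points of `ℝ^d`. -/
abbrev Pt (d : ℕ) := EuclideanSpace ℝ (Fin d)

/-- `f` is a similitude: it scales all distances by some ratio `r > 0`. -/
def IsSimilitude {d : ℕ} (f : Pt d → Pt d) : Prop :=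
  ∃ r : ℝ, 0 < r ∧ ∀ x y, dist (f x) (f y) = r * dist x y

/-- The levels `Λ^{(k)}_ϑ` of a nested structure: `Λ^{(0)}_ϑ = {ϑ}` and
`Λ^{(k+1)}_ϑ = ⋃_{β ∈ Λ^{(k)}_ϑ} Λ_β`. -/
def levels {Λ : Type} (child : Λ → Set Λ) (root : Λ) : ℕ → Set Λ
  | 0 => {root}
  | k + 1 => ⋃ β ∈ levels child root k, child β

/-- The set of parents of `α`. -/
def parentSet {Λ : Type} (child : Λ → Set Λ) (α : Λ) : Set Λ := {γ | α ∈ child γ}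

/-- `P^n(α)`: the set of `n`-fold parents of `α` (`P^0(α) = {α}`). -/
def parentIter {Λ : Type} (child : Λ → Set Λ) : ℕ → Λ → Set Λ
  | 0, α => {α}
  | n + 1, α => ⋃ β ∈ parentIter child n α, parentSet child β

/-- `C_α = ⋃_{β ≠ β' ∈ Λ_α} K_β ∩ K_{β'}`. -/
def Cset {d : ℕ} {Λ : Type} (Kα : Λ → Set (Pt d)) (child : Λ → Set Λ) (α : Λ) :
    Set (Pt d) :=
  ⋃ β ∈ child α, ⋃ β' ∈ child α, ⋃ (_ : β ≠ β'), (Kα β ∩ Kα β')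

/-- `α ∼ β`: there is a similitude mapping `K_α` onto `K_β`. -/
def simRel {d : ℕ} {Λ : Type} (Kα : Λ → Set (Pt d)) (α β : Λ) : Prop :=
  ∃ f : Pt d → Pt d, IsSimilitude f ∧ f '' Kα α = Kα β

/-- The boundary `V_α = ⋃_{β∼α, β≠ϑ} φ_{β,α}(K_β ∩ ⋃_{n≥1} ⋃_{γ∈P^n(β)} C_γ)`. -/
def Vset {d : ℕ} {Λ : Type} (Kα : Λ → Set (Pt d)) (child : Λ → Set Λ)
    (φ : Λ → Λ → Pt d → Pt d) (root α : Λ) : Set (Pt d) :=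
  ⋃ β, ⋃ (_ : simRel Kα β α ∧ β ≠ root),
    φ β α '' (Kα β ∩ ⋃ n, ⋃ (_ : 1 ≤ n), ⋃ γ ∈ parentIter child n β, Cset Kα child γ)

/-- A nested structure `{K_α, Λ_α}_{α ∈ Λ}` of the (connected self-similar) set `K`:
a countable family of distinct compact connected subsets of `K`, none a singleton,
with a root `ϑ` such that `K_ϑ = K`, each `K_α` the union of its (at least two)
children, and every non-root index an offspring of the root. -/
structure NestedStructure (d : ℕ) (K : Set (Pt d)) (Λ : Type) : Type where
  Kα : Λ → Set (Pt d)
  child : Λ → Set Λ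
  root : Λ
  countable : Countable Λ
  inj : Function.Injective Kα
  compact : ∀ α, IsCompact (Kα α)
  connected : ∀ α, IsConnected (Kα α)
  not_singleton : ∀ α, ¬ ∃ x, Kα α = {x}
  subset_K : ∀ α, Kα α ⊆ K
  root_eq : Kα root = K
  child_finite : ∀ α, (child α).Finite
  child_nontrivial : ∀ α, (child α).Nontrivial
  child_union : ∀ α, Kα α = ⋃ β ∈ child α, Kα β
  offspring : ∀ α, α ≠ root → ∃ k, α ∈ levels child root k

/-- A finitely ramified of finite type (f.r.f.t.) nested structure: a nested structure
together with a coherent family of similitudes `φ_{α,β}` for equivalent indices,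
satisfying (A1) finitely many `∼`-equivalence classes, (A2) compatible one-to-one
correspondence between children of equivalent indices, and (A3) all boundaries `V_α`
finite. -/
structure FRFTStructure (d : ℕ) (K : Set (Pt d)) (Λ : Type)
    extends NestedStructure d K Λ where
  φ : Λ → Λ → Pt d → Pt d
  φ_isSim : ∀ α β, simRel Kα α β → IsSimilitude (φ α β)
  φ_maps : ∀ α β, simRel Kα α β → φ α β '' Kα α = Kα β
  φ_refl : ∀ α, φ α α = id
  φ_comp : ∀ α β γ, simRel Kα α γ → simRel Kα γ β → (φ γ β) ∘ (φ α γ) = φ α β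
  A1 : (Set.range fun α => {β | simRel Kα α β}).Finite
  A2 : ∀ α α', simRel Kα α α' → ∀ β ∈ child α,
      ∃! β', β' ∈ child α' ∧ simRel Kα β β' ∧ φ β β' = φ α α'
  A3 : ∀ α, (Vset Kα child φ root α).Finite

/-!
The root is never a child, so for a child `β` of `α` the set `K_β ∩ C_α` already appears in
the boundary `V_β` (take `β ∼ β`, `φ_{β,β} = id` and `α ∈ P¹(β)`), and is finite by (A3);
hence so is `C_α ⊆ ⋃_{β ∈ Λ_α} K_β`. If the root were a child of `α`, another child `K_β`
would lie in `K_β ∩ K_ϑ ⊆ C_α`, hence in the finite set `V_β`, yet a connected set that is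
not a singleton is infinite.
-/

section NestedStructureLemmas

variable {d : ℕ} {Λ : Type}

lemma simRel_refl (Kα : Λ → Set (Pt d)) (α : Λ) : simRel Kα α α :=
  ⟨id, ⟨1, one_pos, by simp⟩, image_id _⟩

section Cset

variable (Kα : Λ → Set (Pt d)) (child : Λ → Set Λ) (α : Λ)

lemma inter_subset_Cset {β β' : Λ} (hβ : β ∈ child α) (hβ' : β' ∈ child α) (hne : β ≠ β') :
    Kα β ∩ Kα β' ⊆ Cset Kα child α := fun _ hx =>
  mem_biUnion hβ (mem_biUnion hβ' (mem_iUnion.2 ⟨hne, hx⟩))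

lemma Cset_subset_biUnion : Cset Kα child α ⊆ ⋃ β ∈ child α, Kα β := by
  simp only [Cset, iUnion_subset_iff]
  exact fun β hβ _ _ _ => inter_subset_left.trans (subset_biUnion_of_mem hβ)

lemma diff_Cset_eq_biUnion (hunion : Kα α = ⋃ β ∈ child α, Kα β) :
    Kα α \ Cset Kα child α = ⋃ β ∈ child α, (Kα β \ Cset Kα child α) := by
  simp only [hunion, iUnion_sdiff]

lemma disjoint_diff_Cset {β β' : Λ} (hβ : β ∈ child α) (hβ' : β' ∈ child α) (hne : β ≠ β') :
    Disjoint (Kα β \ Cset Kα child α) (Kα β' \ Cset Kα child α) :=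
  disjoint_left.2 fun _ hx hx' => hx.2 (inter_subset_Cset Kα child α hβ hβ' hne ⟨hx.1, hx'.1⟩)

end Cset

lemma NestedStructure.infinite_Kα {K : Set (Pt d)} (S : NestedStructure d K Λ) (α : Λ) :
    (S.Kα α).Infinite := by
  obtain ⟨x, hx⟩ := (S.connected α).nonempty
  have hnt : (S.Kα α).Nontrivial :=
    (eq_singleton_or_nontrivial hx).resolve_left fun h => S.not_singleton α ⟨x, h⟩
  exact (S.connected α).isPreconnected.infinite_of_nontrivial hnt

namespace FRFTStructure

variable {K : Set (Pt d)} (S : FRFTStructure d K Λ)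

lemma inter_Cset_subset_Vset {α β : Λ} (hβ : β ∈ S.child α) (hβr : β ≠ S.root) :
    S.Kα β ∩ Cset S.Kα S.child α ⊆ Vset S.Kα S.child S.φ S.root β := by
  have hα : α ∈ parentIter S.child 1 β := by simp [parentIter, parentSet, hβ]
  intro x hx
  refine mem_iUnion₂.2 ⟨β, ⟨simRel_refl _ _, hβr⟩, ?_⟩
  rw [S.φ_refl, image_id]
  exact ⟨hx.1, mem_iUnion₂.2 ⟨1, le_rfl, mem_biUnion hα hx.2⟩⟩

lemma root_not_mem_child (α : Λ) : S.root ∉ S.child α := by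
  intro hroot
  obtain ⟨β, hβ, hβr⟩ := (S.child_nontrivial α).exists_ne S.root
  have hKC : S.Kα β ⊆ S.Kα β ∩ Cset S.Kα S.child α := by
    refine subset_inter subset_rfl fun z hz => ?_
    have hz_root : z ∈ S.Kα S.root := by rw [S.root_eq]; exact S.subset_K β hz
    exact inter_subset_Cset S.Kα S.child α hβ hroot hβr ⟨hz, hz_root⟩
  exact S.infinite_Kα β ((S.A3 β).subset (hKC.trans (S.inter_Cset_subset_Vset hβ hβr)))

lemma finite_inter_Cset {α β : Λ} (hβ : β ∈ S.child α) :
    (S.Kα β ∩ Cset S.Kα S.child α).Finite :=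
  (S.A3 β).subset <| S.inter_Cset_subset_Vset hβ fun h => S.root_not_mem_child α (h ▸ hβ)

lemma finite_Cset (α : Λ) : (Cset S.Kα S.child α).Finite := by
  have hcov : Cset S.Kα S.child α ⊆ ⋃ β ∈ S.child α, (S.Kα β ∩ Cset S.Kα S.child α) := by
    rw [← iUnion₂_inter]
    exact subset_inter (Cset_subset_biUnion _ _ _) subset_rfl
  exact ((S.child_finite α).biUnion fun _ hβ => S.finite_inter_Cset hβ).subset hcov

end FRFTStructure

end NestedStructureLemmas

theorem stmt1_general {d : ℕ} (K : Set (Pt d)) {Λ : Type} (S : FRFTStructure d K Λ) (α : Λ) :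
    (Cset S.Kα S.child α).Finite ∧
    (S.Kα α \ Cset S.Kα S.child α
      = ⋃ β ∈ S.child α, (S.Kα β \ Cset S.Kα S.child α)) ∧
    (∀ β ∈ S.child α, ∀ β' ∈ S.child α, β ≠ β' →
      Disjoint (S.Kα β \ Cset S.Kα S.child α) (S.Kα β' \ Cset S.Kα S.child α)) :=
  ⟨S.finite_Cset α, diff_Cset_eq_biUnion _ _ _ (S.child_union α),
    fun _ hβ _ hβ' hne => disjoint_diff_Cset _ _ _ hβ hβ' hne⟩

/-- **Proposition 2.3(a).** For an f.r.f.t. nested structure of a connected self-similar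
set `K` (associated with an IFS of contractive similitudes `F_i` with ratios `c_i`),
each `C_α` is finite and `K_α ∖ C_α` is the disjoint union of the sets
`K_β ∖ C_α`, `β ∈ Λ_α`. -/
theorem stmt1 {d N : ℕ} (hN : 2 ≤ N) (F : Fin N → Pt d → Pt d) (c : Fin N → ℝ)
    (hc : ∀ i, 0 < c i ∧ c i < 1)
    (hF : ∀ i x y, dist (F i x) (F i y) = c i * dist x y)
    (K : Set (Pt d)) (hKc : IsCompact K) (hKne : K.Nonempty)
    (hself : K = ⋃ i, F i '' K) (hconn : IsConnected K)
    {Λ : Type} (S : FRFTStructure d K Λ) (α : Λ) :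
    (Cset S.Kα S.child α).Finite ∧
    (S.Kα α \ Cset S.Kα S.child α
      = ⋃ β ∈ S.child α, (S.Kα β \ Cset S.Kα S.child α)) ∧
    (∀ β ∈ S.child α, ∀ β' ∈ S.child α, β ≠ β' →
      Disjoint (S.Kα β \ Cset S.Kα S.child α) (S.Kα β' \ Cset S.Kα S.child α)) :=
  stmt1_general K S α
end
end

section
/- Let {K_α, Λ_α}_{α∈Λ} be an f.r.f.t. nested structure of K. Then every α ∈ Λ∖{ϑ} has exactly one parent: there is exactly one γ ∈ Λ with α ∈ Λ_γ. -/
/-!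
A non-root index descends from the root, so it has a parent. If `α` had two parents `γ ≠ γ'`,
follow their ancestries back to the root and stop at the last ancestor `δ` they share: `δ` has
two distinct children whose sets both contain `K_α`, so `K_α ⊆ K_α ∩ C_δ ⊆ V_α`, which is
finite by (A3), whereas `K_α`, connected and not a singleton, is infinite. The same argument
rules out cycles `α → ⋯ → α`, which would let the two ancestries meet again at `α` itself.
-/


open Set

noncomputable section

section ParentIter

variable {Λ : Type} {child : Λ → Set Λ}

@[simp]
lemma mem_parentIter_zero {α δ : Λ} : δ ∈ parentIter child 0 α ↔ δ = α := Iff.rfl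

lemma mem_parentIter_succ {α δ : Λ} {n : ℕ} :
    δ ∈ parentIter child (n + 1) α ↔ ∃ β ∈ child δ, β ∈ parentIter child n α := by
  simp only [parentIter, parentSet, mem_iUnion, exists_prop]
  exact ⟨fun ⟨β, hβ, hδ⟩ => ⟨β, hδ, hβ⟩, fun ⟨β, hδ, hβ⟩ => ⟨β, hβ, hδ⟩⟩

lemma mem_parentIter_one {α δ : Λ} : δ ∈ parentIter child 1 α ↔ α ∈ child δ := by
  simp [mem_parentIter_succ]

lemma mem_parentIter_add {α β δ : Λ} {m n : ℕ} (hδ : δ ∈ parentIter child m β)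
    (hβ : β ∈ parentIter child n α) : δ ∈ parentIter child (m + n) α := by
  induction m generalizing δ with
  | zero => simp_all
  | succ m ih =>
    obtain ⟨γ, hγ, hγβ⟩ := mem_parentIter_succ.1 hδ
    rw [Nat.succ_add]
    exact mem_parentIter_succ.2 ⟨γ, hγ, ih hγβ⟩

lemma root_mem_parentIter_of_mem_levels {root α : Λ} {k : ℕ} (h : α ∈ levels child root k) :
    root ∈ parentIter child k α := by
  induction k generalizing α with
  | zero => exact Eq.symm h
  | succ k ih =>
    simp only [levels, mem_iUnion, exists_prop] at h
    obtain ⟨β, hβ, hαβ⟩ := h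
    exact mem_parentIter_add (ih hβ) (mem_parentIter_one.2 hαβ)

end ParentIter

namespace NestedStructure

variable {d : ℕ} {K : Set (Pt d)} {Λ : Type} (S : NestedStructure d K Λ)

lemma Kα_infinite (α : Λ) : (S.Kα α).Infinite := by
  refine (S.connected α).isPreconnected.infinite_of_nontrivial ?_
  obtain ⟨x, hx⟩ := (S.connected α).nonempty
  by_contra hnt
  exact S.not_singleton α ⟨x, (not_nontrivial_iff.1 hnt).eq_singleton_of_mem hx⟩

lemma Kα_subset_of_mem_child {β γ : Λ} (h : β ∈ S.child γ) : S.Kα β ⊆ S.Kα γ := by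
  rw [S.child_union γ]
  exact subset_biUnion_of_mem h

lemma Kα_subset_of_mem_parentIter {α δ : Λ} {n : ℕ} (h : δ ∈ parentIter S.child n α) :
    S.Kα α ⊆ S.Kα δ := by
  induction n generalizing δ with
  | zero => rw [mem_parentIter_zero.1 h]
  | succ n ih =>
    obtain ⟨β, hβ, hαβ⟩ := mem_parentIter_succ.1 h
    exact (ih hαβ).trans (S.Kα_subset_of_mem_child hβ)

lemma exists_mem_child_of_ne_root {α : Λ} (hα : α ≠ S.root) : ∃ γ, α ∈ S.child γ := by
  obtain ⟨k, hk⟩ := S.offspring α hα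
  cases k with
  | zero => exact absurd hk hα
  | succ k =>
    simp only [levels, mem_iUnion] at hk
    obtain ⟨γ, -, hγ⟩ := hk
    exact ⟨γ, hγ⟩

lemma exists_root_mem_parentIter (α : Λ) : ∃ k, S.root ∈ parentIter S.child k α := by
  by_cases hα : α = S.root
  · exact ⟨0, hα.symm⟩
  · obtain ⟨k, hk⟩ := S.offspring α hα
    exact ⟨k, root_mem_parentIter_of_mem_levels hk⟩

end NestedStructure

namespace FRFTStructure

variable {d : ℕ} {K : Set (Pt d)} {Λ : Type} (S : FRFTStructure d K Λ)

/-- `K_α ∩ C_δ` is part of the boundary `V_α` (the term `β = α` of its union), which is finite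
by (A3). -/
lemma finite_Kα_inter_Kα_inter_Kα {α δ β β' : Λ} {n : ℕ} (hα : α ≠ S.root)
    (hδ : δ ∈ parentIter S.child (n + 1) α) (hβ : β ∈ S.child δ) (hβ' : β' ∈ S.child δ)
    (hne : β ≠ β') : (S.Kα α ∩ (S.Kα β ∩ S.Kα β')).Finite := by
  refine (S.A3 α).subset fun x hx => ?_
  have hrefl : simRel S.Kα α α := ⟨id, ⟨1, one_pos, fun _ _ => (one_mul _).symm⟩, image_id _⟩
  refine mem_iUnion₂.2 ⟨α, ⟨hrefl, hα⟩, ?_⟩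
  rw [S.φ_refl, image_id]
  exact ⟨hx.1, mem_iUnion₂.2 ⟨n + 1, Nat.le_add_left 1 n, mem_iUnion₂.2 ⟨δ, hδ,
    mem_iUnion₂.2 ⟨β, hβ, mem_iUnion₂.2 ⟨β', hβ', mem_iUnion.2 ⟨hne, hx.2⟩⟩⟩⟩⟩⟩

lemma not_mem_parentIter_succ_self {α : Λ} (hα : α ≠ S.root) (k : ℕ) :
    α ∉ parentIter S.child (k + 1) α := by
  intro h
  obtain ⟨β, hβ, hαβ⟩ := mem_parentIter_succ.1 h
  have hβα : β = α := S.inj <| (S.Kα_subset_of_mem_child hβ).antisymm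
    (S.Kα_subset_of_mem_parentIter hαβ)
  rw [hβα] at hβ
  obtain ⟨β', hβ', hne⟩ := (S.child_nontrivial α).exists_ne α
  have hβ'α := S.Kα_subset_of_mem_child hβ'
  exact S.Kα_infinite β' <| (S.finite_Kα_inter_Kα_inter_Kα hα (mem_parentIter_one.2 hβ) hβ hβ'
    hne.symm).subset fun _ hx => ⟨hβ'α hx, hβ'α hx, hx⟩

lemma not_Kα_subset_inter_of_ne {α δ β β' : Λ} {n : ℕ} (hα : α ≠ S.root)
    (hδ : δ ∈ parentIter S.child (n + 1) α) (hβ : β ∈ S.child δ) (hβ' : β' ∈ S.child δ)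
    (hne : β ≠ β') : ¬ S.Kα α ⊆ S.Kα β ∩ S.Kα β' := fun h =>
  S.Kα_infinite α <| (S.finite_Kα_inter_Kα_inter_Kα hα hδ hβ hβ' hne).subset
    fun _ hx => ⟨hx, h hx⟩

lemma eq_of_mem_parentIter_of_mem_child {α δ γ : Λ} {m : ℕ} (hα : α ≠ S.root)
    (hδγ : δ ∈ parentIter S.child m γ) (hδ : α ∈ S.child δ) (hγ : α ∈ S.child γ) :
    δ = γ := by
  cases m with
  | zero => exact hδγ
  | succ m =>
    obtain ⟨β, hβ, hβγ⟩ := mem_parentIter_succ.1 hδγ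
    have hβα : β ∈ parentIter S.child (m + 1) α :=
      mem_parentIter_add hβγ (mem_parentIter_one.2 hγ)
    by_cases hβα' : β = α
    · exact absurd (hβα' ▸ hβα) (S.not_mem_parentIter_succ_self hα m)
    · exact absurd (fun _ hx => ⟨hx, S.Kα_subset_of_mem_parentIter hβα hx⟩)
        (S.not_Kα_subset_inter_of_ne hα (n := 0) (mem_parentIter_one.2 hδ) hδ hβ (Ne.symm hβα'))

lemma eq_of_mem_child_of_common_ancestor {α δ γ γ' : Λ} {n m : ℕ} (hα : α ≠ S.root)
    (hδγ : δ ∈ parentIter S.child n γ) (hδγ' : δ ∈ parentIter S.child m γ')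
    (hγ : α ∈ S.child γ) (hγ' : α ∈ S.child γ') : γ = γ' := by
  induction n generalizing δ m with
  | zero =>
    rw [mem_parentIter_zero.1 hδγ] at hδγ'
    exact S.eq_of_mem_parentIter_of_mem_child hα hδγ' hγ hγ'
  | succ n ih =>
    cases m with
    | zero =>
      rw [mem_parentIter_zero.1 hδγ'] at hδγ
      exact (S.eq_of_mem_parentIter_of_mem_child hα hδγ hγ' hγ).symm
    | succ m =>
      obtain ⟨β, hβ, hβγ⟩ := mem_parentIter_succ.1 hδγ
      obtain ⟨β', hβ', hβ'γ'⟩ := mem_parentIter_succ.1 hδγ'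
      by_cases hne : β = β'
      · subst hne
        exact ih hβγ hβ'γ'
      · have hβα := mem_parentIter_add hβγ (mem_parentIter_one.2 hγ)
        have hβ'α := mem_parentIter_add hβ'γ' (mem_parentIter_one.2 hγ')
        refine absurd (fun _ hx => ⟨?_, ?_⟩)
          (S.not_Kα_subset_inter_of_ne hα (mem_parentIter_succ.2 ⟨β, hβ, hβα⟩) hβ hβ' hne)
        · exact S.Kα_subset_of_mem_parentIter hβα hx
        · exact S.Kα_subset_of_mem_parentIter hβ'α hx

end FRFTStructure

theorem stmt3_general {d : ℕ} (K : Set (Pt d)) {Λ : Type} (S : FRFTStructure d K Λ) :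
    ∀ α : Λ, α ≠ S.root → ∃! γ : Λ, α ∈ S.child γ := by
  intro α hα
  obtain ⟨γ, hγ⟩ := S.exists_mem_child_of_ne_root hα
  refine ⟨γ, hγ, fun γ' hγ' => ?_⟩
  obtain ⟨n, hn⟩ := S.exists_root_mem_parentIter γ
  obtain ⟨m, hm⟩ := S.exists_root_mem_parentIter γ'
  exact S.eq_of_mem_child_of_common_ancestor hα hm hn hγ' hγ

/-- **Proposition 2.3(c).** For an f.r.f.t. nested structure of a connected self-similar
set `K`, every non-root index `α` has exactly one parent: there is exactly one `γ`
with `α ∈ Λ_γ`. -/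
theorem stmt3 {d N : ℕ} (hN : 2 ≤ N) (F : Fin N → Pt d → Pt d) (c : Fin N → ℝ)
    (hc : ∀ i, 0 < c i ∧ c i < 1)
    (hF : ∀ i x y, dist (F i x) (F i y) = c i * dist x y)
    (K : Set (Pt d)) (hKc : IsCompact K) (hKne : K.Nonempty)
    (hself : K = ⋃ i, F i '' K) (hconn : IsConnected K)
    {Λ : Type} (S : FRFTStructure d K Λ) :
    ∀ α : Λ, α ≠ S.root → ∃! γ : Λ, α ∈ S.child γ :=
  stmt3_general K S
end
end

section
/- Let K be a connected p.c.f. self-similar set. Then the canonical nested structure {F_w K, Λ_w}_{w∈W_*}, with Λ_w = {wi : 1 ≤ i ≤ N} and similitudes φ_{w,u} = F_u∘F_w^{-1} for all w, u ∈ W_*, is an f.r.f.t. nested structure of K with exactly one ∼-equivalence class (M = 1); in particular, the boundary V_ϑ of the root equals π(𝒫), the image of the post-critical set under the natural projection, and is finite. -/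
open Set

noncomputable section

/-- `F_w = F_{w_1} ∘ ⋯ ∘ F_{w_m}` for a word `w = w_1⋯w_m`. -/
def Fword {α : Type*} {N : ℕ} (F : Fin N → α → α) : List (Fin N) → α → α
  | [] => id
  | i :: w => F i ∘ Fword F w

/-- The word `[ω]_m = ω_1⋯ω_m` consisting of the first `m` letters of `ω ∈ Σ`. -/
def prefWord {N : ℕ} (ω : ℕ → Fin N) (m : ℕ) : List (Fin N) := (List.range m).map ω

/-- `C_K = ⋃_{i ≠ j} F_iK ∩ F_jK`, the union of the intersections of level-1 cells. -/
def CK {d N : ℕ} (F : Fin N → Pt d → Pt d) (K : Set (Pt d)) : Set (Pt d) :=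
  ⋃ i, ⋃ j, ⋃ (_ : i ≠ j), (F i '' K ∩ F j '' K)

/-- The critical set `𝒞 = π^{-1}(C_K) ⊆ Σ`: those `ω` whose projection point
(the unique point of `⋂_m F_{[ω]_m}K`) lies in `C_K`. -/
def critSet {d N : ℕ} (F : Fin N → Pt d → Pt d) (K : Set (Pt d)) :
    Set (ℕ → Fin N) :=
  {ω | ∃ x ∈ CK F K, ∀ m, x ∈ Fword F (prefWord ω m) '' K}

/-- The post-critical set `𝒫 = ⋃_{m ≥ 1} σ^m(𝒞)`. -/
def postCrit {d N : ℕ} (F : Fin N → Pt d → Pt d) (K : Set (Pt d)) :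
    Set (ℕ → Fin N) :=
  {ω | ∃ m : ℕ, 1 ≤ m ∧ ∃ τ ∈ critSet F K, ω = fun k => τ (k + m)}

/-- The image `π(A)` of a subset `A ⊆ Σ` under the natural projection `π`. -/
def piImage {d N : ℕ} (F : Fin N → Pt d → Pt d) (K : Set (Pt d))
    (A : Set (ℕ → Fin N)) : Set (Pt d) :=
  {x | ∃ ω ∈ A, ∀ m, x ∈ Fword F (prefWord ω m) '' K}

/-! Every cell `F_wK` is a similar copy of `K`, so all indices are equivalent through
`φ_{w,u} = F_u ∘ F_w⁻¹`, children correspond by appending the same letter, and every boundary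
`V_w = F_w(V_ϑ)` is a similar copy of the root boundary. Unwinding the definitions, `V_ϑ` consists
of the points `x ∈ K` with `F_s x ∈ C_K` for some nonempty word `s`, that is, of the projections
of the post-critical sequences; each sequence projects to a single point, so `V_ϑ` is finite.
The p.c.f. assumption also makes the cells pairwise distinct: a cell inside `C_K` would make
every sequence post-critical. -/

open Function

theorem Isometry.surjective_of_map_zero {E : Type*} [NormedAddCommGroup E]
    [InnerProductSpace ℝ E] [FiniteDimensional ℝ E] {g : E → E} (hg : Isometry g)
    (h0 : g 0 = 0) : Surjective g := by
  have hnorm : ∀ x, ‖g x‖ = ‖x‖ := fun x => by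
    simpa only [h0, dist_zero_right] using hg.dist_eq x 0
  have hinner : ∀ x y, inner ℝ (g x) (g y) = inner ℝ x y := fun x y => by
    rw [real_inner_eq_norm_mul_self_add_norm_mul_self_sub_norm_sub_mul_self_div_two,
      real_inner_eq_norm_mul_self_add_norm_mul_self_sub_norm_sub_mul_self_div_two,
      hnorm, hnorm, ← dist_eq_norm, ← dist_eq_norm, hg.dist_eq]
  let e := stdOrthonormalBasis ℝ E
  have he := orthonormal_iff_ite.mp e.orthonormal
  have hv : Orthonormal ℝ (g ∘ e) := orthonormal_iff_ite.mpr fun i j => by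
    simp only [comp_apply, hinner, he]
  -- `g ∘ e` is again an orthonormal basis, and `g x` has the same coordinates in it as `y`
  let B := basisOfLinearIndependentOfCardEqFinrank' (g ∘ e) hv.linearIndependent (by simp)
  intro y
  refine ⟨∑ i, inner ℝ (g (e i)) y • e i, InnerProductSpace.ext_inner_left_basis B fun i => ?_⟩
  simp [B, hinner, inner_sum, real_inner_smul_right, he]

variable {d N : ℕ}

namespace IsSimilitude

theorem continuous {f : Pt d → Pt d} (hf : IsSimilitude f) : Continuous f := by
  obtain ⟨r, hr, hdist⟩ := hf
  exact (LipschitzWith.of_dist_le_mul fun x y => by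
    rw [hdist, Real.coe_toNNReal r hr.le]).continuous (K := r.toNNReal)

theorem injective {f : Pt d → Pt d} (hf : IsSimilitude f) : Injective f := by
  obtain ⟨r, hr, hdist⟩ := hf
  intro x y hxy
  simpa [hxy, hr.ne'] using hdist x y

theorem surjective {f : Pt d → Pt d} (hf : IsSimilitude f) : Surjective f := by
  obtain ⟨r, hr, hdist⟩ := hf
  let g : Pt d → Pt d := fun x => r⁻¹ • (f x - f 0)
  have hg : Isometry g := Isometry.of_dist_eq fun x y => by
    rw [dist_eq_norm, ← smul_sub, sub_sub_sub_cancel_right, norm_smul, ← dist_eq_norm, hdist,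
      Real.norm_of_nonneg (inv_nonneg.mpr hr.le), inv_mul_cancel_left₀ hr.ne']
  intro y
  obtain ⟨x, hx⟩ := hg.surjective_of_map_zero (by simp [g]) (r⁻¹ • (y - f 0))
  exact ⟨x, sub_left_inj.mp (smul_right_injective _ (inv_ne_zero hr.ne') hx)⟩

theorem comp {f g : Pt d → Pt d} (hf : IsSimilitude f) (hg : IsSimilitude g) :
    IsSimilitude (f ∘ g) := by
  obtain ⟨r, hr, hf⟩ := hf
  obtain ⟨s, hs, hg⟩ := hg
  exact ⟨r * s, mul_pos hr hs, fun x y => by simp only [comp_apply, hf, hg, mul_assoc]⟩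

theorem invFun {f : Pt d → Pt d} (hf : IsSimilitude f) : IsSimilitude (Function.invFun f) := by
  have hinv := rightInverse_invFun hf.surjective
  obtain ⟨r, hr, hdist⟩ := hf
  refine ⟨r⁻¹, inv_pos.mpr hr, fun x y => ?_⟩
  have := hdist (Function.invFun f x) (Function.invFun f y)
  rw [hinv x, hinv y] at this
  rw [this, inv_mul_cancel_left₀ hr.ne']

end IsSimilitude

section Words

variable {α : Type*}

theorem Fword_append (F : Fin N → α → α) (u w : List (Fin N)) :
    Fword F (u ++ w) = Fword F u ∘ Fword F w := by
  induction u with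
  | nil => rfl
  | cons i u ih => simp only [List.cons_append, Fword, ih, comp_assoc]

theorem Fword_singleton (F : Fin N → α → α) (i : Fin N) : Fword F [i] = F i := rfl

theorem dist_Fword [PseudoMetricSpace α] {F : Fin N → α → α} {c : Fin N → ℝ}
    (hF : ∀ i x y, dist (F i x) (F i y) = c i * dist x y) (w : List (Fin N)) (x y : α) :
    dist (Fword F w x) (Fword F w y) = (w.map c).prod * dist x y := by
  induction w generalizing x y with
  | nil => simp [Fword]
  | cons i w ih => simp only [Fword, comp_apply, hF, ih, List.map_cons, List.prod_cons, mul_assoc]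

theorem Fword_image_subset {F : Fin N → α → α} {K : Set α} (hself : K = ⋃ i, F i '' K)
    (w : List (Fin N)) : Fword F w '' K ⊆ K := by
  induction w with
  | nil => simp [Fword]
  | cons i w ih =>
    rw [Fword, image_comp]
    exact (image_mono ih).trans ((subset_iUnion (fun i => F i '' K) i).trans hself.superset)

theorem Fword_cons_image_subset {F : Fin N → α → α} {K : Set α} (hself : K = ⋃ i, F i '' K)
    (i : Fin N) (w : List (Fin N)) : Fword F (i :: w) '' K ⊆ F i '' K := by
  rw [Fword, image_comp]
  exact image_mono (Fword_image_subset hself w)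

theorem prefWord_length (ω : ℕ → Fin N) (m : ℕ) : (prefWord ω m).length = m := by
  simp [prefWord]

theorem prefWord_zero (ω : ℕ → Fin N) : prefWord ω 0 = [] := rfl

theorem prefWord_add (ω : ℕ → Fin N) (m k : ℕ) :
    prefWord ω (m + k) = prefWord ω m ++ prefWord (fun i => ω (i + m)) k := by
  simp [prefWord, List.range_add, Function.comp_def, Nat.add_comm]

theorem prefWord_succ (ω : ℕ → Fin N) (m : ℕ) :
    prefWord ω (m + 1) = prefWord ω m ++ [ω m] := by
  simp [prefWord, List.range_succ]

/-- The sequence `wω ∈ Σ`. -/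
def appendSeq (w : List (Fin N)) (ω : ℕ → Fin N) : ℕ → Fin N :=
  fun k => if h : k < w.length then w[k] else ω (k - w.length)

theorem appendSeq_shift (w : List (Fin N)) (ω : ℕ → Fin N) :
    (fun k => appendSeq w ω (k + w.length)) = ω := by
  funext k
  simp [appendSeq]

theorem prefWord_appendSeq (w : List (Fin N)) (ω : ℕ → Fin N) (m : ℕ) :
    prefWord (appendSeq w ω) (w.length + m) = w ++ prefWord ω m := by
  rw [prefWord_add, appendSeq_shift]
  congr 1
  refine List.ext_getElem (prefWord_length _ _) fun i h _ => ?_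
  rw [prefWord_length] at h
  simp [prefWord, appendSeq, h]

theorem appendSeq_prefWord (τ : ℕ → Fin N) (m : ℕ) :
    appendSeq (prefWord τ m) (fun k => τ (k + m)) = τ := by
  funext k
  by_cases hk : k < m
  · simp [appendSeq, prefWord, hk]
  · simp [appendSeq, prefWord_length, hk, Nat.sub_add_cancel (not_lt.mp hk)]

theorem prefWord_image_antitone {F : Fin N → α → α} {K : Set α} (hself : K = ⋃ i, F i '' K)
    (ω : ℕ → Fin N) : Antitone fun m => Fword F (prefWord ω m) '' K := by
  intro k m hkm
  obtain ⟨j, rfl⟩ := Nat.exists_eq_add_of_le hkm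
  simp only [prefWord_add, Fword_append, image_comp]
  exact image_mono (Fword_image_subset hself _)

theorem exists_address {F : Fin N → α → α} {K : Set α} (hself : K = ⋃ i, F i '' K) {x : α}
    (hx : x ∈ K) : ∃ ω : ℕ → Fin N, ∀ m, x ∈ Fword F (prefWord ω m) '' K := by
  have hpre (y : K) : ∃ i, ∃ z : K, F i z = y := by
    have hy : (y : α) ∈ ⋃ i, F i '' K := hself ▸ y.2
    obtain ⟨i, z, hz, hzy⟩ := mem_iUnion.mp hy
    exact ⟨i, ⟨z, hz⟩, hzy⟩
  choose idx pre hFpre using hpre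
  let ω m := idx (pre^[m] ⟨x, hx⟩)
  have hω m : Fword F (prefWord ω m) (pre^[m] ⟨x, hx⟩) = x := by
    induction m with
    | zero => rfl
    | succ m ih =>
      rw [prefWord_succ, Fword_append, comp_apply, Fword_singleton,
        iterate_succ_apply', hFpre, ih]
  exact ⟨ω, fun m => ⟨_, (pre^[m] ⟨x, hx⟩).2, hω m⟩⟩

end Words

def wordChildren (N : ℕ) (w : List (Fin N)) : Set (List (Fin N)) :=
  {u | ∃ i : Fin N, u = w ++ [i]}

def cellSim (F : Fin N → Pt d → Pt d) (w u : List (Fin N)) : Pt d → Pt d :=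
  Fword F u ∘ Function.invFun (Fword F w)

theorem mem_parentIter_wordChildren {n : ℕ} {β γ : List (Fin N)} :
    γ ∈ parentIter (wordChildren N) n β ↔ ∃ s : List (Fin N), s.length = n ∧ β = γ ++ s := by
  induction n generalizing γ with
  | zero => simp [parentIter, eq_comm]
  | succ n ih =>
    simp only [parentIter, mem_iUnion, exists_prop]
    constructor
    · rintro ⟨_, hβ', i, rfl⟩
      obtain ⟨s, rfl, rfl⟩ := ih.mp hβ'
      exact ⟨i :: s, rfl, by simp⟩
    · rintro ⟨_ | ⟨i, s⟩, hs, rfl⟩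
      · simp at hs
      · exact ⟨γ ++ [i], ih.mpr ⟨s, by simpa using hs, by simp⟩, i, rfl⟩

theorem mem_levels_wordChildren (w : List (Fin N)) :
    w ∈ levels (wordChildren N) [] w.length := by
  induction w using List.reverseRecOn with
  | nil => rfl
  | append_singleton w i ih =>
    rw [List.length_append, List.length_singleton, levels]
    exact mem_biUnion ih ⟨i, rfl⟩

theorem wordChildren_nontrivial (hN : 2 ≤ N) (w : List (Fin N)) :
    (wordChildren N w).Nontrivial := by
  have : Nontrivial (Fin N) := Fin.nontrivial_iff_two_le.mpr hN
  obtain ⟨i, j, hij⟩ := exists_pair_ne (Fin N)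
  exact ⟨_, ⟨i, rfl⟩, _, ⟨j, rfl⟩, fun h => hij (by simpa using h)⟩

theorem Fword_image_eq_biUnion_wordChildren {α : Type*} {F : Fin N → α → α} {K : Set α}
    (hself : K = ⋃ i, F i '' K) (w : List (Fin N)) :
    Fword F w '' K = ⋃ u ∈ wordChildren N w, Fword F u '' K := by
  conv_lhs => rw [hself]
  ext x
  simp [wordChildren, Fword_append, Fword_singleton]

theorem inter_subset_CK {F : Fin N → Pt d → Pt d} {K : Set (Pt d)} {i j : Fin N}
    (hij : i ≠ j) :
    F i '' K ∩ F j '' K ⊆ CK F K :=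
  subset_iUnion_of_subset i <| subset_iUnion_of_subset j <| subset_iUnion_of_subset hij le_rfl

structure IsSelfSimilarSet (F : Fin N → Pt d → Pt d) (c : Fin N → ℝ) (K : Set (Pt d)) :
    Prop where
  ratio_mem : ∀ i, 0 < c i ∧ c i < 1
  dist_eq : ∀ i x y, dist (F i x) (F i y) = c i * dist x y
  isCompact : IsCompact K
  nonempty : K.Nonempty
  eq_iUnion : K = ⋃ i, F i '' K

namespace IsSelfSimilarSet

variable {F : Fin N → Pt d → Pt d} {c : Fin N → ℝ} {K : Set (Pt d)}

theorem isSimilitude_Fword (hK : IsSelfSimilarSet F c K) (w : List (Fin N)) :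
    IsSimilitude (Fword F w) := by
  refine ⟨(w.map c).prod, List.prod_pos ?_, dist_Fword hK.dist_eq w⟩
  rintro _ hr
  obtain ⟨i, -, rfl⟩ := List.mem_map.mp hr
  exact (hK.ratio_mem i).1

theorem exists_mem_prefWord_image (hK : IsSelfSimilarSet F c K) (ω : ℕ → Fin N) :
    ∃ x, ∀ m, x ∈ Fword F (prefWord ω m) '' K := by
  have hcompact m : IsCompact (Fword F (prefWord ω m) '' K) :=
    hK.isCompact.image (hK.isSimilitude_Fword _).continuous
  obtain ⟨x, hx⟩ := IsCompact.nonempty_iInter_of_sequence_nonempty_isCompact_isClosed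
    (fun m => Fword F (prefWord ω m) '' K)
    (fun m => prefWord_image_antitone hK.eq_iUnion ω m.le_succ) (fun _ => hK.nonempty.image _)
    (hcompact 0) fun m => (hcompact m).isClosed
  exact ⟨x, mem_iInter.mp hx⟩

theorem eq_of_mem_prefWord_image (hK : IsSelfSimilarSet F c K) {ω : ℕ → Fin N} {x y : Pt d}
    (hx : ∀ m, x ∈ Fword F (prefWord ω m) '' K) (hy : ∀ m, y ∈ Fword F (prefWord ω m) '' K) :
    x = y := by
  have : Nonempty (Fin N) := ⟨ω 0⟩
  obtain ⟨i₀, hi₀⟩ := Finite.exists_max c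
  set q := c i₀
  have hq : 0 ≤ q ∧ q < 1 := ⟨(hK.ratio_mem i₀).1.le, (hK.ratio_mem i₀).2⟩
  have hratio m : ((prefWord ω m).map c).prod ≤ q ^ m := by
    induction m with
    | zero => simp [prefWord_zero]
    | succ m ih =>
      rw [prefWord_succ, List.map_append, List.prod_append, pow_succ]
      simpa using mul_le_mul ih (hi₀ _) (hK.ratio_mem _).1.le (pow_nonneg hq.1 m)
  have hdist m : dist x y ≤ q ^ m * Metric.diam K := by
    obtain ⟨a, ha, rfl⟩ := hx m
    obtain ⟨b, hb, rfl⟩ := hy m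
    rw [dist_Fword hK.dist_eq]
    exact mul_le_mul (hratio m) (Metric.dist_le_diam_of_mem hK.isCompact.isBounded ha hb)
      dist_nonneg (pow_nonneg hq.1 m)
  have hlim : Filter.Tendsto (fun m => q ^ m * Metric.diam K) Filter.atTop (nhds 0) := by
    simpa using (tendsto_pow_atTop_nhds_zero_of_lt_one hq.1 hq.2).mul_const (Metric.diam K)
  exact dist_le_zero.mp (ge_of_tendsto' hlim hdist)

/-- Prefixing any `ω` with `w` gives a critical sequence. -/
theorem postCrit_eq_univ (hK : IsSelfSimilarSet F c K) {w : List (Fin N)} (hw : w ≠ [])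
    (hsub : Fword F w '' K ⊆ CK F K) : postCrit F K = univ := by
  refine eq_univ_of_forall fun ω => ⟨w.length, List.length_pos_iff.mpr hw, appendSeq w ω, ?_,
    (appendSeq_shift w ω).symm⟩
  obtain ⟨x, hx⟩ := hK.exists_mem_prefWord_image (appendSeq w ω)
  refine ⟨x, hsub ?_, hx⟩
  have := hx (w.length + 0)
  rwa [prefWord_appendSeq, prefWord_zero, List.append_nil] at this

theorem not_image_subset_CK (hK : IsSelfSimilarSet F c K) (hN : 2 ≤ N)
    (hpcf : (postCrit F K).Finite) {w : List (Fin N)} (hw : w ≠ []) :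
    ¬ Fword F w '' K ⊆ CK F K := fun hsub => by
  have : Nontrivial (Fin N) := Fin.nontrivial_iff_two_le.mpr hN
  exact infinite_univ (hK.postCrit_eq_univ hw hsub ▸ hpcf)

theorem Fword_cons_image_ne (hK : IsSelfSimilarSet F c K) (hN : 2 ≤ N)
    (hpcf : (postCrit F K).Finite) (j : Fin N) (u : List (Fin N)) :
    Fword F (j :: u) '' K ≠ K := fun heq => by
  have : Nontrivial (Fin N) := Fin.nontrivial_iff_two_le.mpr hN
  obtain ⟨i, hij⟩ := exists_ne j
  have hKj : K ⊆ F j '' K := heq.symm.subset.trans (Fword_cons_image_subset hK.eq_iUnion j u)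
  refine hK.not_image_subset_CK hN hpcf (w := [i]) (List.cons_ne_nil _ _) fun x hx => ?_
  rw [Fword_singleton] at hx
  exact inter_subset_CK hij ⟨hx, hKj (hK.eq_iUnion.superset (mem_iUnion_of_mem i hx))⟩

theorem Fword_image_injective (hK : IsSelfSimilarSet F c K) (hN : 2 ≤ N)
    (hpcf : (postCrit F K).Finite) : Injective fun w : List (Fin N) => Fword F w '' K := by
  intro w
  induction w with
  | nil =>
    rintro (_ | ⟨j, u⟩) h
    · rfl
    · exact absurd (h.symm.trans (image_id K)) (hK.Fword_cons_image_ne hN hpcf j u)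
  | cons i w ih =>
    rintro (_ | ⟨j, u⟩) h
    · exact absurd (h.trans (image_id K)) (hK.Fword_cons_image_ne hN hpcf i w)
    obtain rfl | hij := eq_or_ne i j
    · simp only [Fword, image_comp] at h
      rw [ih ((image_injective.mpr (hK.isSimilitude_Fword [i]).injective) h)]
    · refine absurd (fun x hx => ?_) (hK.not_image_subset_CK hN hpcf (List.cons_ne_nil i w))
      refine inter_subset_CK hij ⟨Fword_cons_image_subset hK.eq_iUnion i w hx, ?_⟩
      exact Fword_cons_image_subset hK.eq_iUnion j u (h.subset hx)

theorem Cset_wordChildren (hK : IsSelfSimilarSet F c K) (γ : List (Fin N)) :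
    Cset (fun w => Fword F w '' K) (wordChildren N) γ = Fword F γ '' CK F K := by
  have hpair (i j : Fin N) : Fword F (γ ++ [i]) '' K ∩ Fword F (γ ++ [j]) '' K =
      Fword F γ '' (F i '' K ∩ F j '' K) := by
    rw [Fword_append, Fword_append, image_comp, image_comp, Fword_singleton, Fword_singleton,
      image_inter (hK.isSimilitude_Fword γ).injective]
  ext x
  simp only [Cset, wordChildren, CK, mem_iUnion, exists_prop, image_iUnion]
  constructor
  · rintro ⟨_, ⟨i, rfl⟩, _, ⟨j, rfl⟩, hne, hx⟩
    exact ⟨i, j, fun hij => hne (by rw [hij]), hpair i j ▸ hx⟩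
  · rintro ⟨i, j, hij, hx⟩
    exact ⟨_, ⟨i, rfl⟩, _, ⟨j, rfl⟩, fun h => hij (by simpa using h), (hpair i j).symm ▸ hx⟩

theorem cellSim_comp_Fword (hK : IsSelfSimilarSet F c K) (w u : List (Fin N)) :
    cellSim F w u ∘ Fword F w = Fword F u :=
  funext fun x => congrArg (Fword F u) (leftInverse_invFun (hK.isSimilitude_Fword w).injective x)

theorem isSimilitude_cellSim (hK : IsSelfSimilarSet F c K) (w u : List (Fin N)) :
    IsSimilitude (cellSim F w u) :=
  (hK.isSimilitude_Fword u).comp (hK.isSimilitude_Fword w).invFun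

theorem cellSim_image (hK : IsSelfSimilarSet F c K) (w u : List (Fin N)) :
    cellSim F w u '' (Fword F w '' K) = Fword F u '' K := by
  rw [← image_comp, hK.cellSim_comp_Fword]

theorem simRel_cell (hK : IsSelfSimilarSet F c K) (w u : List (Fin N)) :
    simRel (fun w => Fword F w '' K) w u :=
  ⟨cellSim F w u, hK.isSimilitude_cellSim w u, hK.cellSim_image w u⟩

theorem cellSim_self (hK : IsSelfSimilarSet F c K) (w : List (Fin N)) : cellSim F w w = id :=
  funext (rightInverse_invFun (hK.isSimilitude_Fword w).surjective)

theorem cellSim_comp (hK : IsSelfSimilarSet F c K) (a b g : List (Fin N)) :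
    cellSim F g b ∘ cellSim F a g = cellSim F a b := by
  apply (hK.isSimilitude_Fword a).surjective.injective_comp_right
  dsimp only
  rw [comp_assoc, hK.cellSim_comp_Fword, hK.cellSim_comp_Fword, hK.cellSim_comp_Fword]

theorem cellSim_append (hK : IsSelfSimilarSet F c K) (w u : List (Fin N)) (i : Fin N) :
    cellSim F (w ++ [i]) (u ++ [i]) = cellSim F w u := by
  apply (hK.isSimilitude_Fword (w ++ [i])).surjective.injective_comp_right
  dsimp only
  rw [hK.cellSim_comp_Fword, Fword_append, Fword_append, ← comp_assoc, hK.cellSim_comp_Fword]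

theorem eq_of_cellSim_append_eq (hK : IsSelfSimilarSet F c K) (hN : 2 ≤ N)
    (hpcf : (postCrit F K).Finite) {w u : List (Fin N)} {i j : Fin N}
    (h : cellSim F (w ++ [i]) (u ++ [j]) = cellSim F w u) : j = i := by
  have hword : Fword F (u ++ [j]) = Fword F (u ++ [i]) := by
    rw [← hK.cellSim_comp_Fword (w ++ [i]), h, ← hK.cellSim_append w u i,
      hK.cellSim_comp_Fword]
  simpa using hK.Fword_image_injective hN hpcf (congrArg (· '' K) hword)

theorem Vset_root (hK : IsSelfSimilarSet F c K) :
    Vset (fun w => Fword F w '' K) (wordChildren N) (cellSim F) [] [] =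
      {x | x ∈ K ∧ ∃ s : List (Fin N), s ≠ [] ∧ Fword F s x ∈ CK F K} := by
  ext x
  simp only [Vset, mem_iUnion, mem_image, exists_prop, mem_inter_iff,
    mem_parentIter_wordChildren, hK.Cset_wordChildren]
  constructor
  · rintro ⟨_, ⟨-, hβ⟩, _, ⟨⟨a, ha, rfl⟩, n, hn, γ, ⟨s, rfl, rfl⟩, z, hz, hza⟩, rfl⟩
    have hinv : cellSim F (γ ++ s) [] (Fword F (γ ++ s) a) = a :=
      congrFun (hK.cellSim_comp_Fword (γ ++ s) []) a
    rw [Fword_append, comp_apply] at hza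
    refine ⟨by rwa [hinv], s, List.ne_nil_of_length_pos hn, ?_⟩
    rwa [hinv, ← (hK.isSimilitude_Fword γ).injective hza]
  · rintro ⟨hx, s, hs, hsx⟩
    refine ⟨s, ⟨hK.simRel_cell s [], hs⟩, Fword F s x, ⟨⟨x, hx, rfl⟩, s.length,
      List.length_pos_iff.mpr hs, [], ⟨s, rfl, rfl⟩, _, hsx, rfl⟩,
      congrFun (hK.cellSim_comp_Fword s []) x⟩

theorem Vset_eq_image (hK : IsSelfSimilarSet F c K) (α : List (Fin N)) :
    Vset (fun w => Fword F w '' K) (wordChildren N) (cellSim F) [] α =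
      Fword F α '' Vset (fun w => Fword F w '' K) (wordChildren N) (cellSim F) [] [] := by
  simp only [Vset, image_iUnion, ← image_comp, cellSim, Fword, id_comp,
    hK.simRel_cell _ α, hK.simRel_cell _ []]

theorem Fword_mem_prefWord_image_appendSeq (hK : IsSelfSimilarSet F c K) {ω : ℕ → Fin N}
    {x : Pt d} (hx : ∀ m, x ∈ Fword F (prefWord ω m) '' K) (w : List (Fin N)) (k : ℕ) :
    Fword F w x ∈ Fword F (prefWord (appendSeq w ω) k) '' K := by
  obtain hk | hk := le_total k w.length
  · refine prefWord_image_antitone hK.eq_iUnion _ (hk.trans (w.length.le_add_right 0)) ?_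
    dsimp only
    rw [prefWord_appendSeq, prefWord_zero, List.append_nil]
    exact mem_image_of_mem _ (by simpa [prefWord_zero, Fword] using hx 0)
  · obtain ⟨j, rfl⟩ := Nat.exists_eq_add_of_le hk
    rw [prefWord_appendSeq, Fword_append, image_comp]
    exact mem_image_of_mem _ (hx j)

theorem piImage_postCrit (hK : IsSelfSimilarSet F c K) :
    piImage F K (postCrit F K) =
      {x | x ∈ K ∧ ∃ s : List (Fin N), s ≠ [] ∧ Fword F s x ∈ CK F K} := by
  ext x
  constructor
  · rintro ⟨_, ⟨m, hm, τ, ⟨z, hz, hτ⟩, rfl⟩, hx⟩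
    refine ⟨by simpa [prefWord_zero, Fword] using hx 0, prefWord τ m, ?_, ?_⟩
    · rw [← List.length_pos_iff, prefWord_length]
      exact hm
    · have hτx := hK.Fword_mem_prefWord_image_appendSeq hx (prefWord τ m)
      rw [appendSeq_prefWord] at hτx
      rwa [hK.eq_of_mem_prefWord_image hτx hτ]
  · rintro ⟨hx, s, hs, hsx⟩
    obtain ⟨ω, hω⟩ := exists_address hK.eq_iUnion hx
    exact ⟨ω, ⟨s.length, List.length_pos_iff.mpr hs, appendSeq s ω,
      ⟨_, hsx, hK.Fword_mem_prefWord_image_appendSeq hω s⟩, (appendSeq_shift s ω).symm⟩, hω⟩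

theorem piImage_postCrit_finite (hK : IsSelfSimilarSet F c K) (hpcf : (postCrit F K).Finite) :
    (piImage F K (postCrit F K)).Finite := by
  have hsub : piImage F K (postCrit F K) ⊆
      ⋃ ω ∈ postCrit F K, {x | ∀ m, x ∈ Fword F (prefWord ω m) '' K} :=
    fun _ ⟨ω, hω, hx⟩ => mem_biUnion hω hx
  refine (hpcf.biUnion fun ω _ => ?_).subset hsub
  exact Set.Subsingleton.finite fun _ hx _ hy => hK.eq_of_mem_prefWord_image hx hy

theorem Fword_image_not_singleton (hK : IsSelfSimilarSet F c K) (hN : 2 ≤ N)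
    (hpcf : (postCrit F K).Finite) (w : List (Fin N)) : ¬ ∃ x, Fword F w '' K = {x} := by
  rintro ⟨x, hx⟩
  have hchild (i : Fin N) : Fword F (w ++ [i]) '' K = {x} := by
    refine (hK.nonempty.image _).subset_singleton_iff.mp (hx ▸ ?_)
    rw [Fword_append, image_comp]
    exact image_mono (Fword_image_subset hK.eq_iUnion [i])
  obtain ⟨_, ⟨i, rfl⟩, _, ⟨j, rfl⟩, hij⟩ := wordChildren_nontrivial hN w
  exact hij (hK.Fword_image_injective hN hpcf ((hchild i).trans (hchild j).symm))

def canonicalNestedStructure (hK : IsSelfSimilarSet F c K) (hN : 2 ≤ N)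
    (hpcf : (postCrit F K).Finite) (hconn : IsConnected K) :
    NestedStructure d K (List (Fin N)) where
  Kα w := Fword F w '' K
  child := wordChildren N
  root := []
  countable := inferInstance
  inj := hK.Fword_image_injective hN hpcf
  compact w := hK.isCompact.image (hK.isSimilitude_Fword w).continuous
  connected w := hconn.image _ (hK.isSimilitude_Fword w).continuous.continuousOn
  not_singleton := hK.Fword_image_not_singleton hN hpcf
  subset_K := Fword_image_subset hK.eq_iUnion
  root_eq := image_id K
  child_finite w := (finite_range fun i : Fin N => w ++ [i]).subset fun _ ⟨i, hi⟩ => ⟨i, hi.symm⟩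
  child_nontrivial := wordChildren_nontrivial hN
  child_union := Fword_image_eq_biUnion_wordChildren hK.eq_iUnion
  offspring w _ := ⟨w.length, mem_levels_wordChildren w⟩

def canonicalFRFTStructure (hK : IsSelfSimilarSet F c K) (hN : 2 ≤ N)
    (hpcf : (postCrit F K).Finite) (hconn : IsConnected K) :
    FRFTStructure d K (List (Fin N)) :=
  { hK.canonicalNestedStructure hN hpcf hconn with
    φ := cellSim F
    φ_isSim w u _ := hK.isSimilitude_cellSim w u
    φ_maps w u _ := hK.cellSim_image w u
    φ_refl := hK.cellSim_self
    φ_comp a b g _ _ := hK.cellSim_comp a b g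
    A1 := (finite_singleton univ).subset <| range_subset_singleton.mpr <|
      funext fun w => eq_univ_of_forall (hK.simRel_cell w)
    A2 := by
      rintro w w' - _ ⟨i, rfl⟩
      refine ⟨w' ++ [i], ⟨⟨i, rfl⟩, hK.simRel_cell _ _, hK.cellSim_append w w' i⟩, ?_⟩
      rintro _ ⟨⟨j, rfl⟩, -, h⟩
      rw [hK.eq_of_cellSim_append_eq hN hpcf h]
    A3 w := by
      show (Vset (fun w => Fword F w '' K) (wordChildren N) (cellSim F) [] w).Finite
      rw [hK.Vset_eq_image w, hK.Vset_root, ← hK.piImage_postCrit]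
      exact (hK.piImage_postCrit_finite hpcf).image _ }

end IsSelfSimilarSet

theorem stmt6_general {d N : ℕ} (hN : 2 ≤ N) (F : Fin N → Pt d → Pt d) (c : Fin N → ℝ)
    (hc : ∀ i, 0 < c i ∧ c i < 1)
    (hF : ∀ i x y, dist (F i x) (F i y) = c i * dist x y)
    (K : Set (Pt d)) (hKc : IsCompact K)
    (hself : K = ⋃ i, F i '' K) (hconn : IsConnected K)
    (hpcf : (postCrit F K).Finite) :
    ∃ S : FRFTStructure d K (List (Fin N)),
      S.Kα = (fun w => Fword F w '' K) ∧
      S.child = (fun w => {u : List (Fin N) | ∃ i : Fin N, u = w ++ [i]}) ∧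
      S.root = ([] : List (Fin N)) ∧
      S.φ = (fun w u => Fword F u ∘ Function.invFun (Fword F w)) ∧
      (∀ w u : List (Fin N), simRel S.Kα w u) ∧
      Vset S.Kα S.child S.φ S.root S.root = piImage F K (postCrit F K) ∧
      (Vset S.Kα S.child S.φ S.root S.root).Finite := by
  have hK : IsSelfSimilarSet F c K := ⟨hc, hF, hKc, hconn.nonempty, hself⟩
  have hV : Vset (fun w => Fword F w '' K) (wordChildren N) (cellSim F) [] [] =
      piImage F K (postCrit F K) := hK.Vset_root.trans hK.piImage_postCrit.symm
  refine ⟨hK.canonicalFRFTStructure hN hpcf hconn, rfl, rfl, rfl, rfl, hK.simRel_cell, hV, ?_⟩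
  exact hV ▸ hK.piImage_postCrit_finite hpcf

/-- **Theorem 3.1.** Let `K` be a connected p.c.f. self-similar set. Then the canonical
nested structure `{F_wK, Λ_w}_{w ∈ W_*}`, with `Λ_w = {wi : 1 ≤ i ≤ N}` and
`φ_{w,u} = F_u ∘ F_w^{-1}`, is an f.r.f.t. nested structure of `K` with exactly one
equivalence class (`M = 1`); in particular the boundary `V_ϑ` of the root equals
`π(𝒫)` and is finite. -/
theorem stmt6 {d N : ℕ} (hN : 2 ≤ N) (F : Fin N → Pt d → Pt d) (c : Fin N → ℝ)
    (hc : ∀ i, 0 < c i ∧ c i < 1)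
    (hF : ∀ i x y, dist (F i x) (F i y) = c i * dist x y)
    (hFinj : ∀ i, Function.Injective (F i))
    (K : Set (Pt d)) (hKc : IsCompact K) (hKne : K.Nonempty)
    (hself : K = ⋃ i, F i '' K) (hconn : IsConnected K)
    (hpcf : (postCrit F K).Finite) :
    ∃ S : FRFTStructure d K (List (Fin N)),
      S.Kα = (fun w => Fword F w '' K) ∧
      S.child = (fun w => {u : List (Fin N) | ∃ i : Fin N, u = w ++ [i]}) ∧
      S.root = ([] : List (Fin N)) ∧
      S.φ = (fun w u => Fword F u ∘ Function.invFun (Fword F w)) ∧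
      (∀ w u : List (Fin N), simRel S.Kα w u) ∧
      Vset S.Kα S.child S.φ S.root S.root = piImage F K (postCrit F K) ∧
      (Vset S.Kα S.child S.φ S.root S.root).Finite :=
  stmt6_general hN F c hc hF K hKc hself hconn hpcf
end
end

section
/- Let a' be a positive real number. The system in the unknowns b', d', e', f', s, r_1 given by f' = 1, d' = b', e' + r_1 + r_1·a' = a', s + s·(1+a')(1+b')/(2(1+a'+b')) = 1, s·e' + s·(1+a')(a'+b')/(2(1+a'+b')) = e', 2s·b' + s + s·(1+b')(a'+b')/(2(1+a'+b')) = b', has a solution with b', d', e', f', s, r_1 all positive if and only if a' > 2; in that case the solution is unique and given by b' = d' = (2+3a')/(a'−2), e' = 1/(2a') + 1/4 + a'/4, f' = 1, s = (2+a')/(4+3a'), r_1 = (−2 − a' + 3a'²)/(4a' + 4a'²). -/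
/-!
Eliminating `s` between the two equations containing `b'` leaves
`(b' + 1) * ((a' - 2) * b' - (3 * a' + 2)) = 0`, so positivity of `b'` forces `a' > 2` and
`b' = (2 + 3a')/(a' - 2)`. Once `b'` is known, the remaining equations are linear in `s`, `e'`
and `r₁` in turn, and the resulting closed forms do solve the system whenever `a' > 2`.
-/

namespace OverlappingGasket

/-- The system of Theorem 5.7 after substituting `f' = 1` and `d' = b'`; `s` is the common
renormalisation factor `r₃ = r₄ = r₅ = r₆` and `r` is `r₁`. -/
structure HarmonicSystem (a b e s r : ℝ) : Prop where
  resistance : e + r + r * a = a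
  renorm_one : s + s * (1 + a) * (1 + b) / (2 * (1 + a + b)) = 1
  renorm_e : s * e + s * (1 + a) * (a + b) / (2 * (1 + a + b)) = e
  renorm_b : 2 * s * b + s + s * (1 + b) * (a + b) / (2 * (1 + a + b)) = b

namespace HarmonicSystem

variable {a b e s r : ℝ}

theorem b_relation (ha : 0 < a) (hb : 0 < b) (h : HarmonicSystem a b e s r) :
    (a - 2) * b = 3 * a + 2 := by
  have hD : 2 * (1 + a + b) ≠ 0 := by positivity
  have hK := h.renorm_one
  have hB := h.renorm_b
  field_simp at hK hB
  have key : 2 * (1 + a + b) * ((b + 1) * ((a - 2) * b - (3 * a + 2))) = 0 := by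
    linear_combination (2 * b * (2 * (1 + a + b)) + 2 * (1 + a + b) + (1 + b) * (a + b)) * hK
      - (2 * (1 + a + b) + (1 + a) * (1 + b)) * hB
  have hb1 : b + 1 ≠ 0 := by positivity
  simpa [hD, hb1, sub_eq_zero] using key

theorem two_lt (ha : 0 < a) (hb : 0 < b) (h : HarmonicSystem a b e s r) :
    2 < a := by
  nlinarith [h.b_relation ha hb]

theorem s_relation (ha : 0 < a) (hb : 0 < b) (h : HarmonicSystem a b e s r) :
    s * (4 + 3 * a) = 2 + a := by
  have hD : 2 * (1 + a + b) ≠ 0 := by positivity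
  have hK := h.renorm_one
  field_simp at hK
  have hab := h.b_relation ha hb
  have : 2 * a * (s * (4 + 3 * a) - (2 + a)) = 0 := by
    linear_combination (a - 2) * hK - (s * (3 + a) - 2) * hab
  have ha2 : 2 * a ≠ 0 := by positivity
  simpa [ha2, sub_eq_zero] using this

theorem e_relation (ha : 0 < a) (hb : 0 < b) (h : HarmonicSystem a b e s r) :
    4 * a * e = a ^ 2 + a + 2 := by
  have hD : 2 * (1 + a + b) ≠ 0 := by positivity
  have hE := h.renorm_e
  field_simp at hE
  have hab := h.b_relation ha hb
  have hs := h.s_relation ha hb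
  have : (a + 2) * (1 + a) * (4 * a * e - (a ^ 2 + a + 2)) = 0 := by
    linear_combination -(4 + 3 * a) * ((a - 2) * hE - (2 * s * e + s * (1 + a) - 2 * e) * hab)
      + (e * 2 * a * (a + 2) + (1 + a) * (a ^ 2 + a + 2)) * hs
  have hc : (a + 2) * (1 + a) ≠ 0 := by positivity
  simpa [hc, sub_eq_zero] using this

theorem r_relation (ha : 0 < a) (hb : 0 < b) (h : HarmonicSystem a b e s r) :
    4 * a * (1 + a) * r = 3 * a ^ 2 - a - 2 := by
  linear_combination 4 * a * h.resistance - h.e_relation ha hb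

theorem eq_closedForm (ha : 0 < a) (hb : 0 < b) (h : HarmonicSystem a b e s r) :
    2 < a ∧ b = (2 + 3 * a) / (a - 2) ∧ e = 1 / (2 * a) + 1 / 4 + a / 4 ∧
      s = (2 + a) / (4 + 3 * a) ∧ r = (-2 - a + 3 * a ^ 2) / (4 * a + 4 * a ^ 2) := by
  have ha₂ := h.two_lt ha hb
  refine ⟨ha₂, ?_, ?_, ?_, ?_⟩
  · rw [eq_div_iff (by linarith)]
    linear_combination h.b_relation ha hb
  · field_simp
    linear_combination 2 * h.e_relation ha hb
  · rw [eq_div_iff (by positivity)]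
    exact h.s_relation ha hb
  · rw [eq_div_iff (by positivity)]
    linear_combination h.r_relation ha hb

end HarmonicSystem

theorem harmonicSystem_closedForm {a : ℝ} (ha : 2 < a) :
    HarmonicSystem a ((2 + 3 * a) / (a - 2)) (1 / (2 * a) + 1 / 4 + a / 4)
      ((2 + a) / (4 + 3 * a)) ((-2 - a + 3 * a ^ 2) / (4 * a + 4 * a ^ 2)) := by
  have h₁ : a - 2 ≠ 0 := by linarith
  have h₂ : 4 + 3 * a ≠ 0 := by linarith
  have h₃ : a * (a + 2) ≠ 0 := by positivity
  have hsum : 1 + a + (2 + 3 * a) / (a - 2) = a * (a + 2) / (a - 2) := by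
    field_simp
    ring
  constructor <;> (try rw [hsum]) <;> field_simp <;> ring

end OverlappingGasket

/-- **Theorem 5.7 (homogeneous regular harmonic structures on the overlapping gasket
with open bottom).** Let `a' > 0`. The system
`f' = 1`, `d' = b'`, `e' + r₁ + r₁·a' = a'`,
`s + s(1+a')(1+b')/(2(1+a'+b')) = 1`,
`s·e' + s(1+a')(a'+b')/(2(1+a'+b')) = e'`,
`2s·b' + s + s(1+b')(a'+b')/(2(1+a'+b')) = b'`
has a solution with `b', d', e', f', s, r₁` all positive iff `a' > 2`; in that case the
solution is unique, given by `b' = d' = (2+3a')/(a'−2)`, `e' = 1/(2a') + 1/4 + a'/4`,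
`f' = 1`, `s = (2+a')/(4+3a')`, `r₁ = (−2−a'+3a'²)/(4a'+4a'²)`. -/
theorem stmt14 (a' : ℝ) (ha' : 0 < a') :
    ((∃ b' d' e' f' s r₁ : ℝ,
        0 < b' ∧ 0 < d' ∧ 0 < e' ∧ 0 < f' ∧ 0 < s ∧ 0 < r₁ ∧
        f' = 1 ∧ d' = b' ∧ e' + r₁ + r₁ * a' = a' ∧
        s + s * (1 + a') * (1 + b') / (2 * (1 + a' + b')) = 1 ∧
        s * e' + s * (1 + a') * (a' + b') / (2 * (1 + a' + b')) = e' ∧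
        2 * s * b' + s + s * (1 + b') * (a' + b') / (2 * (1 + a' + b')) = b') ↔
      2 < a') ∧
    (∀ b' d' e' f' s r₁ : ℝ,
        0 < b' → 0 < d' → 0 < e' → 0 < f' → 0 < s → 0 < r₁ →
        f' = 1 → d' = b' → e' + r₁ + r₁ * a' = a' →
        s + s * (1 + a') * (1 + b') / (2 * (1 + a' + b')) = 1 →
        s * e' + s * (1 + a') * (a' + b') / (2 * (1 + a' + b')) = e' →
        2 * s * b' + s + s * (1 + b') * (a' + b') / (2 * (1 + a' + b')) = b' →
        b' = (2 + 3 * a') / (a' - 2) ∧ d' = (2 + 3 * a') / (a' - 2) ∧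
        e' = 1 / (2 * a') + 1 / 4 + a' / 4 ∧ f' = 1 ∧
        s = (2 + a') / (4 + 3 * a') ∧
        r₁ = (-2 - a' + 3 * a' ^ 2) / (4 * a' + 4 * a' ^ 2)) := by
  refine ⟨⟨?_, fun ha₂ => ?_⟩, ?_⟩
  · rintro ⟨b', _, _, _, _, _, hb, -, -, -, -, -, -, -, h₃, h₄, h₅, h₆⟩
    exact (OverlappingGasket.HarmonicSystem.eq_closedForm ha' hb ⟨h₃, h₄, h₅, h₆⟩).1
  · have h := OverlappingGasket.harmonicSystem_closedForm ha₂
    have hb : 0 < (2 + 3 * a') / (a' - 2) := div_pos (by linarith) (by linarith)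
    have hr : 0 < (-2 - a' + 3 * a' ^ 2) / (4 * a' + 4 * a' ^ 2) :=
      div_pos (by nlinarith) (by positivity)
    exact ⟨_, _, _, 1, _, _, hb, hb, by positivity, one_pos, by positivity, hr,
      rfl, rfl, h.resistance, h.renorm_one, h.renorm_e, h.renorm_b⟩
  · intro b' d' e' f' s r₁ hb _ _ _ _ _ hf hd h₃ h₄ h₅ h₆
    obtain ⟨-, hb', he', hs', hr'⟩ :=
      OverlappingGasket.HarmonicSystem.eq_closedForm ha' hb ⟨h₃, h₄, h₅, h₆⟩
    exact ⟨hb', hd.trans hb', he', hf, hs', hr'⟩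
end

section
/- The system of equations in positive real numbers a, b, c, d, e, r given by r·(2a+b+c+d) = a+b, r·(4a+4c) = a+c, r·(2a+b+3c+d) = b+c, d = r·(2b + 2d + (a+b+2c+e)/2), and r·(2a+b+c+d + 2/((a+b+2c+e)^{-1} + (a+b+e)^{-1})) = e, has exactly the one-parameter family of solutions r = 1/4, c = 2a, b = (13+√73)a/16, d = 3(13+√73)a/16, e = (11+7√73)a/16, for arbitrary a > 0. -/
/-! The second equation forces `r = 1/4`; the first four are then linear and give `c = 2a`,
`d = 3b`, `e = 7b - 5a`. Substituting these, the fifth equation becomes the quadratic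
`8b² - 13ab + 3a² = 0`, whose roots are `b = (13 ± √73)a/16`; the smaller root would make
`e = 7b - 5a` negative. -/

theorem two_div_inv_add_inv {K : Type*} [Field K] {p q : K} (hp : p ≠ 0) (hq : q ≠ 0) :
    2 / (p⁻¹ + q⁻¹) = 2 * p * q / (p + q) := by
  rw [inv_add_inv hp hq, div_div_eq_mul_div, mul_assoc]

theorem eight_lt_sqrt_seventyThree : 8 < Real.sqrt 73 :=
  Real.lt_sqrt_of_sq_lt (by norm_num)

theorem windmill_quadratic_eq_zero_iff (a b : ℝ) :
    8 * b ^ 2 - 13 * a * b + 3 * a ^ 2 = 0 ↔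
      b = (13 + Real.sqrt 73) * a / 16 ∨ b = (13 - Real.sqrt 73) * a / 16 := by
  have hdiscrim : discrim 8 (-13 * a) (3 * a ^ 2) = (Real.sqrt 73 * a) * (Real.sqrt 73 * a) := by
    rw [discrim]
    linear_combination (-a ^ 2) * Real.mul_self_sqrt (show (0 : ℝ) ≤ 73 by norm_num)
  convert quadratic_eq_zero_iff (by norm_num) hdiscrim b using 1 <;> ring_nf

theorem windmill_linear_part {a b c d e r : ℝ} (hac : a + c ≠ 0)
    (h₁ : r * (2*a + b + c + d) = a + b) (h₂ : r * (4*a + 4*c) = a + c)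
    (h₃ : r * (2*a + b + 3*c + d) = b + c) (h₄ : d = r * (2*b + 2*d + (a + b + 2*c + e) / 2)) :
    r = 1/4 ∧ c = 2*a ∧ d = 3*b ∧ e = 7*b - 5*a := by
  have hr : r = 1/4 := by
    have : (4 * r - 1) * (a + c) = 0 := by linear_combination h₂
    linarith [(mul_eq_zero.1 this).resolve_right hac]
  subst hr
  have hc : c = 2*a := by linarith
  have hd : d = 3*b := by linarith
  exact ⟨rfl, hc, hd, by subst hc hd; linarith⟩

theorem windmill_last_eq_iff {a b c d e r : ℝ} (ha : 0 < a) (hab : 5*a < 7*b)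
    (hr : r = 1/4) (hc : c = 2*a) (hd : d = 3*b) (he : e = 7*b - 5*a) :
    r * (2*a + b + c + d + 2 / ((a + b + 2*c + e)⁻¹ + (a + b + e)⁻¹)) = e ↔
      8 * b ^ 2 - 13 * a * b + 3 * a ^ 2 = 0 := by
  have hP : a + b + 2*c + e = 8 * b := by rw [hc, he]; ring
  have hQ : a + b + e = 8 * b - 4 * a := by rw [he]; ring
  rw [hP, hQ, two_div_inv_add_inv (by linarith) (by linarith), hr, hc, hd, he]
  have hPQ : 8 * b + (8 * b - 4 * a) ≠ 0 := by linarith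
  rw [add_div' _ _ _ hPQ, mul_div_assoc', div_eq_iff hPQ]
  constructor
  · intro h
    linear_combination (-1/8) * h
  · intro h
    linear_combination (-8) * h

theorem stmt15_general (a b c d e r : ℝ) (ha : 0 < a) (hc : 0 < c)
    (he : 0 < e) :
    (r * (2*a + b + c + d) = a + b ∧
     r * (4*a + 4*c) = a + c ∧
     r * (2*a + b + 3*c + d) = b + c ∧
     d = r * (2*b + 2*d + (a + b + 2*c + e) / 2) ∧
     r * (2*a + b + c + d + 2 / ((a + b + 2*c + e)⁻¹ + (a + b + e)⁻¹)) = e) ↔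
    (r = 1/4 ∧ c = 2*a ∧ b = (13 + Real.sqrt 73) * a / 16 ∧
     d = 3 * (13 + Real.sqrt 73) * a / 16 ∧
     e = (11 + 7 * Real.sqrt 73) * a / 16) := by
  have hsqrt := eight_lt_sqrt_seventyThree
  constructor
  · rintro ⟨h₁, h₂, h₃, h₄, h₅⟩
    obtain ⟨hr, hca, hdb, heb⟩ := windmill_linear_part (by positivity) h₁ h₂ h₃ h₄
    have hab : 5*a < 7*b := by linarith
    rcases (windmill_quadratic_eq_zero_iff a b).1
      ((windmill_last_eq_iff ha hab hr hca hdb heb).1 h₅) with hb | hb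
    · exact ⟨hr, hca, hb, by rw [hdb, hb]; ring, by rw [heb, hb]; ring⟩
    · nlinarith
  · rintro ⟨hr, hca, hb, hd_eq, he_eq⟩
    have hdb : d = 3*b := by rw [hd_eq, hb]; ring
    have heb : e = 7*b - 5*a := by rw [he_eq, hb]; ring
    have hab : 5*a < 7*b := by rw [hb]; nlinarith
    refine ⟨?_, ?_, ?_, ?_, (windmill_last_eq_iff ha hab hr hca hdb heb).2
      ((windmill_quadratic_eq_zero_iff a b).2 (.inl hb))⟩ <;>
      subst hr hca hdb heb <;> ring

/-- **Theorem 5.8 (the rotationally symmetric homogeneous regular harmonic structure on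
the Vicsek windmill set).** The system in positive reals `a, b, c, d, e, r` given by
`r(2a+b+c+d) = a+b`, `r(4a+4c) = a+c`, `r(2a+b+3c+d) = b+c`,
`d = r(2b+2d+(a+b+2c+e)/2)`, and
`r(2a+b+c+d + 2/((a+b+2c+e)⁻¹+(a+b+e)⁻¹)) = e`
has exactly the one-parameter family of solutions `r = 1/4`, `c = 2a`,
`b = (13+√73)a/16`, `d = 3(13+√73)a/16`, `e = (11+7√73)a/16`, for arbitrary `a > 0`. -/
theorem stmt15 (a b c d e r : ℝ) (ha : 0 < a) (hb : 0 < b) (hc : 0 < c)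
    (hd : 0 < d) (he : 0 < e) (hr : 0 < r) :
    (r * (2*a + b + c + d) = a + b ∧
     r * (4*a + 4*c) = a + c ∧
     r * (2*a + b + 3*c + d) = b + c ∧
     d = r * (2*b + 2*d + (a + b + 2*c + e) / 2) ∧
     r * (2*a + b + c + d + 2 / ((a + b + 2*c + e)⁻¹ + (a + b + e)⁻¹)) = e) ↔
    (r = 1/4 ∧ c = 2*a ∧ b = (13 + Real.sqrt 73) * a / 16 ∧
     d = 3 * (13 + Real.sqrt 73) * a / 16 ∧
     e = (11 + 7 * Real.sqrt 73) * a / 16) :=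
  stmt15_general a b c d e r ha hc he
end

section
/- Let G = (S,E) be a finite strongly connected directed graph with a distinguished vertex s_0, and let r : E → (0,∞) and c : E → (0,1) be edge weights, extended multiplicatively to walks (r_{e_1⋯e_m} = ∏_k r_{e_k} and c_{e_1⋯e_m} = ∏_k c_{e_k}). Assume the homogeneity condition: for any two walks e and e' starting at s_0 with the same terminal vertex and c_e = c_{e'}, one has r_e = r_{e'}. Then for any vertices s, t and any walks α, β from s_0 to s and α', β' from s_0 to t with c_α/c_β = c_{α'}/c_{β'}, one has r_α/r_β = r_{α'}/r_{β'}; that is, the ratio r_α/r_β for two walks from s_0 to a common vertex depends only on the ratio c_α/c_β. -/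
/-!
Pick a walk `γ` from `s` back to `s₀` (strong connectivity). The walks `αγβ'` and `βγα'` both
run from `s₀` to `t`, and the hypothesis on the `c`-ratios says exactly that their `c`-products
agree. Homogeneity then equates their `r`-products, `r_α r_γ r_{β'} = r_β r_γ r_{α'}`, and
cancelling `r_γ` gives the claim.
-/

/-- `w : Fin (m+1) → E` is a walk from `s` to `t` in the directed graph with edge
endpoint maps `src`, `tgt`. -/
def IsWalkFromTo {S E : Type*} (src tgt : E → S) (s t : S) (m : ℕ)
    (w : Fin (m + 1) → E) : Prop :=
  (∀ k : Fin m, tgt (w k.castSucc) = src (w k.succ)) ∧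
  src (w 0) = s ∧ tgt (w (Fin.last m)) = t

namespace IsWalkFromTo

variable {S E : Type*} {src tgt : E → S} {s u t : S} {m n : ℕ}
  {w₁ : Fin (m + 1) → E} {w₂ : Fin (n + 1) → E}

-- Without the ascription, elaborating against `Fin (m + 1 + n + 1) → E` would split the
-- index set as `(m + 1 + n) + 1` rather than `(m + 1) + (n + 1)`.
theorem append (h₁ : IsWalkFromTo src tgt s u m w₁) (h₂ : IsWalkFromTo src tgt u t n w₂) :
    IsWalkFromTo src tgt s t (m + 1 + n)
      (Fin.append w₁ w₂ : Fin (m + 1 + (n + 1)) → E) := by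
  obtain ⟨h₁step, h₁src, h₁tgt⟩ := h₁
  obtain ⟨h₂step, h₂src, h₂tgt⟩ := h₂
  refine ⟨fun k => ?_, ?_, ?_⟩
  · rcases lt_trichotomy (k : ℕ) m with hk | hk | hk
    · have hcast : k.castSucc = Fin.castAdd (n + 1) (⟨k, hk⟩ : Fin m).castSucc := rfl
      have hsucc : k.succ = Fin.castAdd (n + 1) (⟨k, hk⟩ : Fin m).succ := rfl
      rw [hcast, hsucc, Fin.append_left, Fin.append_left]
      exact h₁step _
    · have hcast : k.castSucc = Fin.castAdd (n + 1) (Fin.last m) := Fin.ext hk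
      have hsucc : k.succ = Fin.natAdd (m + 1) (0 : Fin (n + 1)) := Fin.ext (by simp [hk])
      rw [hcast, hsucc, Fin.append_left, Fin.append_right, h₁tgt, h₂src]
    · have hj : (k : ℕ) - (m + 1) < n := by omega
      have hcast : k.castSucc = Fin.natAdd (m + 1) (⟨k - (m + 1), hj⟩ : Fin n).castSucc :=
        Fin.ext (by simp; omega)
      have hsucc : k.succ = Fin.natAdd (m + 1) (⟨k - (m + 1), hj⟩ : Fin n).succ :=
        Fin.ext (by simp; omega)
      rw [hcast, hsucc, Fin.append_right, Fin.append_right]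
      exact h₂step _
  · exact (congrArg src (Fin.append_left w₁ w₂ 0)).trans h₁src
  · exact (congrArg tgt (Fin.append_right w₁ w₂ (Fin.last n))).trans h₂tgt

end IsWalkFromTo

theorem Fin.prod_univ_append_succ {M α : Type*} [CommMonoid M] {m n : ℕ} (f : α → M)
    (u : Fin (m + 1) → α) (v : Fin (n + 1) → α) :
    ∏ k : Fin (m + 1 + n + 1), f ((Fin.append u v : Fin (m + 1 + (n + 1)) → α) k) =
      (∏ k, f (u k)) * ∏ k, f (v k) :=
  (Fin.prod_univ_add (a := m + 1) (b := n + 1) fun k => f (Fin.append u v k)).trans <| by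
    simp only [Fin.append_left, Fin.append_right]

theorem stmt16_general {S E : Type} (src tgt : E → S) (s₀ : S)
    (hsc : ∀ s t : S, ∃ (m : ℕ) (w : Fin (m + 1) → E), IsWalkFromTo src tgt s t m w)
    (r : E → ℝ) (hr : ∀ e, 0 < r e)
    (c : E → ℝ) (hc : ∀ e, 0 < c e ∧ c e < 1)
    (hhom : ∀ (t : S) (m m' : ℕ) (w : Fin (m + 1) → E) (w' : Fin (m' + 1) → E),
        IsWalkFromTo src tgt s₀ t m w → IsWalkFromTo src tgt s₀ t m' w' →
        (∏ k, c (w k)) = (∏ k, c (w' k)) → (∏ k, r (w k)) = (∏ k, r (w' k))) :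
    ∀ (s t : S) (m₁ m₂ m₃ m₄ : ℕ) (α : Fin (m₁ + 1) → E) (β : Fin (m₂ + 1) → E)
      (α' : Fin (m₃ + 1) → E) (β' : Fin (m₄ + 1) → E),
      IsWalkFromTo src tgt s₀ s m₁ α → IsWalkFromTo src tgt s₀ s m₂ β →
      IsWalkFromTo src tgt s₀ t m₃ α' → IsWalkFromTo src tgt s₀ t m₄ β' →
      (∏ k, c (α k)) / (∏ k, c (β k)) = (∏ k, c (α' k)) / (∏ k, c (β' k)) →
      (∏ k, r (α k)) / (∏ k, r (β k)) = (∏ k, r (α' k)) / (∏ k, r (β' k)) := by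
  intro s t m₁ m₂ m₃ m₄ α β α' β' hα hβ hα' hβ' hcc
  have c_ne : ∀ {N : ℕ} (w : Fin (N + 1) → E), ∏ k, c (w k) ≠ 0 :=
    fun _ => Finset.prod_ne_zero_iff.mpr fun _ _ => (hc _).1.ne'
  have r_ne : ∀ {N : ℕ} (w : Fin (N + 1) → E), ∏ k, r (w k) ≠ 0 :=
    fun _ => Finset.prod_ne_zero_iff.mpr fun _ _ => (hr _).ne'
  obtain ⟨m₀, γ, hγ⟩ := hsc s s₀
  have hr_eq := hhom t _ _ _ _ ((hα.append hγ).append hβ') ((hβ.append hγ).append hα') (by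
    simp only [Fin.prod_univ_append_succ]
    rw [div_eq_div_iff (c_ne β) (c_ne β')] at hcc
    linear_combination (∏ k, c (γ k)) * hcc)
  simp only [Fin.prod_univ_append_succ] at hr_eq
  rw [div_eq_div_iff (r_ne β) (r_ne β')]
  apply mul_right_cancel₀ (r_ne γ)
  linear_combination hr_eq

/-- **Proposition 6.2.** Let `G = (S,E)` be a finite strongly connected directed graph
with a distinguished vertex `s₀`, and let `r : E → (0,∞)` and `c : E → (0,1)` be edge
weights extended multiplicatively to walks. Assume homogeneity: any two walks from
`s₀` with the same terminal vertex and the same `c`-product have the same `r`-product.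
Then for walks `α, β` from `s₀` to `s` and `α', β'` from `s₀` to `t` with
`c_α/c_β = c_{α'}/c_{β'}`, one has `r_α/r_β = r_{α'}/r_{β'}`: the ratio `r_α/r_β`
depends only on the ratio `c_α/c_β`. -/
theorem stmt16 {S E : Type} [Finite S] [Finite E] (src tgt : E → S) (s₀ : S)
    (hsc : ∀ s t : S, ∃ (m : ℕ) (w : Fin (m + 1) → E), IsWalkFromTo src tgt s t m w)
    (r : E → ℝ) (hr : ∀ e, 0 < r e)
    (c : E → ℝ) (hc : ∀ e, 0 < c e ∧ c e < 1)
    (hhom : ∀ (t : S) (m m' : ℕ) (w : Fin (m + 1) → E) (w' : Fin (m' + 1) → E),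
        IsWalkFromTo src tgt s₀ t m w → IsWalkFromTo src tgt s₀ t m' w' →
        (∏ k, c (w k)) = (∏ k, c (w' k)) → (∏ k, r (w k)) = (∏ k, r (w' k))) :
    ∀ (s t : S) (m₁ m₂ m₃ m₄ : ℕ) (α : Fin (m₁ + 1) → E) (β : Fin (m₂ + 1) → E)
      (α' : Fin (m₃ + 1) → E) (β' : Fin (m₄ + 1) → E),
      IsWalkFromTo src tgt s₀ s m₁ α → IsWalkFromTo src tgt s₀ s m₂ β →
      IsWalkFromTo src tgt s₀ t m₃ α' → IsWalkFromTo src tgt s₀ t m₄ β' →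
      (∏ k, c (α k)) / (∏ k, c (β k)) = (∏ k, c (α' k)) / (∏ k, c (β' k)) →
      (∏ k, r (α k)) / (∏ k, r (β k)) = (∏ k, r (α' k)) / (∏ k, r (β' k)) :=
  stmt16_general src tgt s₀ hsc r hr c hc hhom
end
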